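/- Let Ĝ be the primal-dual completion of a map G on an orientable surface. An orientation of Ĝ is a Schnyder orientation (i.e. corresponds to an EDGE angle labeling of G) if and only if every closed walk W of the dual Ĝ* satisfies δ(W) ≡ 0 (mod 3), where δ(W) = (#out-edges crossing W left-to-right) − (#out-edges crossing W right-to-left). -/

import Mathlib

/-!
Combinatorial framework for flows and homology on a map on an orientable surface.

* A `Multigraph` is a set of edges with a fixed reference orientation (source/target);
  flows on it are elements of ℤ^E.
* A dart is an edge together with a direction of traversal (`true` = forward).
* `charFlow l` is the characteristic flow of a list of darts (a walk):
  #forward traversals − #backward traversals of each edge.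
* `beta p q = Σ_e p_e q_{e*}` is the pairing between flows on G and flows on its dual G*
  (dual flows are indexed by the same edge set via e ↦ e*).
* A `SurfaceMap` records, for each edge, the faces on its left and right, and for each
  face its counterclockwise facial walk; the dual graph G* has the faces as vertices and
  e* oriented from the face on the right of e to the face on the left.
* `GoodFacialWalks` is the defining geometric property of the ccw facial walks:
  the ccw facial walk of a face f uses e forward iff f is on the left of e.
* Two flows are homologous iff their difference lies in the subgroup generated by the
  characteristic flows of the ccw facial walks.
-/

structure Multigraph (V E : Type) where
  src : E → V
  tgt : E → V

namespace Multigraph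

variable {V E : Type}

def dtail (M : Multigraph V E) (d : E × Bool) : V := if d.2 then M.src d.1 else M.tgt d.1

def dhead (M : Multigraph V E) (d : E × Bool) : V := if d.2 then M.tgt d.1 else M.src d.1

/-- A closed walk: a nonempty list of darts, consecutively chained, wrapping around. -/
def IsClosedWalk (M : Multigraph V E) (l : List (E × Bool)) : Prop :=
  l ≠ [] ∧ l.Chain' (fun d d' => M.dhead d = M.dtail d') ∧
    ∀ d ∈ l.head?, ∀ d' ∈ l.getLast?, M.dhead d' = M.dtail d

end Multigraph

/-- Characteristic flow of a walk (list of darts). -/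
def charFlow {E : Type} [DecidableEq E] (l : List (E × Bool)) : E → ℤ :=
  fun e => (l.count (e, true) : ℤ) - (l.count (e, false) : ℤ)

/-- The bilinear pairing β between flows of G and flows of G*. -/
def beta {E : Type} [Fintype E] (p q : E → ℤ) : ℤ := ∑ e, p e * q e

structure SurfaceMap (V E F : Type) where
  G : Multigraph V E
  leftFace : E → F
  rightFace : E → F
  /-- the counterclockwise facial walk of each face -/
  facialWalk : F → List (E × Bool)

namespace SurfaceMap

variable {V E F : Type}

/-- The dual map G*: vertices are the faces of G, and e* goes from the face on the
right of e to the face on the left of e. -/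
def dual (M : SurfaceMap V E F) : Multigraph F E := ⟨M.rightFace, M.leftFace⟩

/-- The subgroup 𝔽 of ℤ^E generated by the ccw facial flows. -/
def FacialSubgroup [DecidableEq E] (M : SurfaceMap V E F) : AddSubgroup (E → ℤ) :=
  AddSubgroup.closure (Set.range fun f => charFlow (M.facialWalk f))

/-- Two flows are homologous iff their difference lies in 𝔽. -/
def Homologous [DecidableEq E] (M : SurfaceMap V E F) (p q : E → ℤ) : Prop :=
  p - q ∈ M.FacialSubgroup

/-- Geometric defining property of the ccw facial walks. -/
def GoodFacialWalks [DecidableEq E] [DecidableEq F] (M : SurfaceMap V E F) : Prop :=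
  (∀ f, M.G.IsClosedWalk (M.facialWalk f)) ∧
  ∀ f e, charFlow (M.facialWalk f) e =
    (if M.leftFace e = f then 1 else 0) - (if M.rightFace e = f then 1 else 0)

end SurfaceMap
/-!
The primal-dual completion Ĝ of a map G.  Ĝ is itself a map on the same surface; its
vertices are classified as primal-vertices, dual-vertices, and edge-vertices (of degree 4,
one on each edge of G), and every edge of Ĝ joins a primal- or dual-vertex to an
edge-vertex.  We fix the reference orientation of each edge of Ĝ to point from its
primal- or dual-vertex towards its edge-vertex.  Faces of Ĝ correspond to the angles of G.
-/

inductive PDKind | primal | dualv | edgev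
deriving DecidableEq

structure PDCompletion (V E F : Type) extends SurfaceMap V E F where
  kind : V → PDKind
  src_not_edgev : ∀ e, kind (G.src e) ≠ PDKind.edgev
  tgt_edgev : ∀ e, kind (G.tgt e) = PDKind.edgev

namespace PDCompletion

variable {V E F : Type}

/-- The characteristic flow of the set `Out` of out-edges of an orientation ρ of Ĝ
(`ρ e = true` means e is directed towards its edge-vertex, i.e. is an out-edge; out-edges
are taken with their actual direction, which is the reference one). -/
def outFlow {E : Type} (ρ : E → Bool) : E → ℤ := fun e => if ρ e then 1 else 0

/-- δ(W) = β(Out, W): #out-edges crossing the dual walk W from left to right minus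
#out-edges crossing it from right to left. -/
def delta [Fintype E] [DecidableEq E] (ρ : E → Bool) (W : List (E × Bool)) : ℤ :=
  beta (outFlow ρ) (charFlow W)

/-- Outdegree of a vertex of Ĝ in the orientation ρ. -/
def outdeg [Fintype E] [DecidableEq V] (M : PDCompletion V E F) (ρ : E → Bool) (v : V) : ℕ :=
  (Finset.univ.filter fun e =>
    (ρ e = true ∧ M.G.src e = v) ∨ (ρ e = false ∧ M.G.tgt e = v)).card

/-- Degree of a vertex of Ĝ. -/
def degree [Fintype E] [DecidableEq V] (M : PDCompletion V E F) (v : V) : ℕ :=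
  (Finset.univ.filter fun e => M.G.src e = v ∨ M.G.tgt e = v).card

/-- A mod₃-orientation of Ĝ: primal- and dual-vertices have outdegree ≡ 0 (mod 3),
edge-vertices have outdegree ≡ 1 (mod 3). -/
def IsMod3 [Fintype E] [DecidableEq V] (M : PDCompletion V E F) (ρ : E → Bool) : Prop :=
  ∀ v, if M.kind v = PDKind.edgev
    then M.outdeg ρ v ≡ 1 [MOD 3] else M.outdeg ρ v ≡ 0 [MOD 3]

/-- A Schnyder orientation of Ĝ: an orientation corresponding to an EDGE angle labeling
of G.  Faces of Ĝ are the angles of G; the labeling rule of the correspondence is that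
crossing a non-out-edge keeps the label and crossing an out-edge counterclockwise around
its primal- or dual-vertex increases the label by 1 (so ℓ(left face) = ℓ(right face) + 1
across an out-edge), and each edge-vertex has outdegree 1 or 4 (type 1/2 or type 0). -/
def IsSchnyderOrientation [Fintype E] [DecidableEq V] (M : PDCompletion V E F)
    (ρ : E → Bool) : Prop :=
  (∀ v, M.kind v = PDKind.edgev → M.outdeg ρ v = 1 ∨ M.outdeg ρ v = 4) ∧
  ∃ ℓ : F → ZMod 3, ∀ e,
    ℓ (M.leftFace e) = ℓ (M.rightFace e) + (if ρ e then 1 else 0)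

end PDCompletion

/-!
Give the dual edge e* the weight 1 ∈ ℤ/3 if e is an out-edge and 0 otherwise; then δ(W) mod 3
is the total weight of W.  The labelling in a Schnyder orientation is exactly a potential for
these weights on Ĝ*, and weights on a graph admit a potential iff they sum to zero around every
closed walk (integrate along walks from a base point of each component).  At an edge-vertex v,
δ of the dual facial walk around v is minus the number of edges directed into v; this number is
at most 4 and divisible by 3, so the outdegree 4 - #(in-edges) is 4 or 1.
-/

section WalkSums

variable {E A : Type}

def dartValue [Neg A] (c : E → A) (d : E × Bool) : A := if d.2 then c d.1 else -c d.1

def walkSum [AddCommGroup A] (c : E → A) (l : List (E × Bool)) : A := (l.map (dartValue c)).sum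

def revDart (d : E × Bool) : E × Bool := (d.1, !d.2)

variable [AddCommGroup A] (c : E → A)

@[simp] lemma walkSum_nil : walkSum c [] = 0 := rfl

@[simp] lemma walkSum_cons (d : E × Bool) (l : List (E × Bool)) :
    walkSum c (d :: l) = dartValue c d + walkSum c l := List.sum_cons

@[simp] lemma walkSum_append (l l' : List (E × Bool)) :
    walkSum c (l ++ l') = walkSum c l + walkSum c l' := by
  simp [walkSum]

@[simp] lemma dartValue_revDart (d : E × Bool) : dartValue c (revDart d) = -dartValue c d := by
  cases d with | mk e b => cases b <;> simp [dartValue, revDart]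

lemma walkSum_reverse_map_revDart (l : List (E × Bool)) :
    walkSum c (l.map revDart).reverse = -walkSum c l := by
  induction l with
  | nil => simp
  | cons d l ih => simp [ih, add_comm]

lemma map_walkSum {B : Type} [AddCommGroup B] (φ : A →+ B) (l : List (E × Bool)) :
    φ (walkSum c l) = walkSum (φ ∘ c) l := by
  simp only [walkSum, map_list_sum, List.map_map]
  congr 1
  refine List.map_congr_left fun d _ => ?_
  cases d with | mk e b => cases b <;> simp [dartValue]

lemma beta_charFlow_cons [Fintype E] [DecidableEq E] (p : E → ℤ) (d : E × Bool)
    (l : List (E × Bool)) :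
    beta p (charFlow (d :: l)) = dartValue p d + beta p (charFlow l) := by
  obtain ⟨e₀, b⟩ := d
  have hcons : ∀ e, p e * charFlow ((e₀, b) :: l) e
      = (if e = e₀ then dartValue p (e₀, b) else 0) + p e * charFlow l e := by
    intro e
    by_cases he : e = e₀ <;> cases b <;>
      simp [charFlow, dartValue, he, Prod.ext_iff, eq_comm (a := e₀)] <;> ring
  simp only [beta, hcons, Finset.sum_add_distrib, Finset.sum_ite_eq', Finset.mem_univ, if_true]

lemma beta_charFlow [Fintype E] [DecidableEq E] (p : E → ℤ) (l : List (E × Bool)) :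
    beta p (charFlow l) = walkSum p l := by
  induction l with
  | nil => simp [beta, charFlow]
  | cons d l ih => rw [beta_charFlow_cons, ih, walkSum_cons]

end WalkSums

namespace Multigraph

variable {V E : Type}

def IsWalk (M : Multigraph V E) : V → V → List (E × Bool) → Prop
  | u, v, [] => u = v
  | u, v, d :: l => M.dtail d = u ∧ M.IsWalk (M.dhead d) v l

variable (M : Multigraph V E)

@[simp] lemma isWalk_nil {u v : V} : M.IsWalk u v [] ↔ u = v := Iff.rfl

@[simp] lemma isWalk_cons {u v : V} {d : E × Bool} {l : List (E × Bool)} :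
    M.IsWalk u v (d :: l) ↔ M.dtail d = u ∧ M.IsWalk (M.dhead d) v l := Iff.rfl

@[simp] lemma dtail_revDart (d : E × Bool) : M.dtail (revDart d) = M.dhead d := by
  cases d with | mk e b => cases b <;> rfl

@[simp] lemma dhead_revDart (d : E × Bool) : M.dhead (revDart d) = M.dtail d := by
  cases d with | mk e b => cases b <;> rfl

variable {M}

lemma IsWalk.append {u v w : V} {l l' : List (E × Bool)} (h : M.IsWalk u v l)
    (h' : M.IsWalk v w l') : M.IsWalk u w (l ++ l') := by
  induction l generalizing u with
  | nil => exact (isWalk_nil M).1 h ▸ h'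
  | cons d l ih => exact ⟨h.1, ih h.2⟩

lemma IsWalk.reverse {u v : V} {l : List (E × Bool)} (h : M.IsWalk u v l) :
    M.IsWalk v u (l.map revDart).reverse := by
  induction l generalizing u with
  | nil => exact ((isWalk_nil M).1 h).symm
  | cons d l ih =>
    simpa [← h.1] using (ih h.2).append (l' := [revDart d]) (by simp)

lemma isWalk_cons_iff_isChain {u v : V} {d : E × Bool} {l : List (E × Bool)} :
    M.IsWalk u v (d :: l) ↔ M.dtail d = u ∧
      (d :: l).IsChain (fun d d' => M.dhead d = M.dtail d') ∧
      M.dhead ((d :: l).getLast (List.cons_ne_nil d l)) = v := by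
  induction l generalizing u d with
  | nil => simp
  | cons d' l ih =>
    rw [isWalk_cons, ih, List.isChain_cons_cons, List.getLast_cons_cons]
    grind

lemma isClosedWalk_iff {l : List (E × Bool)} :
    M.IsClosedWalk l ↔ l ≠ [] ∧ ∃ v, M.IsWalk v v l := by
  cases l with
  | nil => simp [IsClosedWalk]
  | cons d l =>
    have hlast := List.getLast?_eq_some_getLast (List.cons_ne_nil d l)
    constructor
    · rintro ⟨-, hc, hcl⟩
      exact ⟨List.cons_ne_nil d l, M.dtail d,
        isWalk_cons_iff_isChain.2 ⟨rfl, hc, hcl d rfl _ hlast⟩⟩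
    · rintro ⟨-, v, hw⟩
      obtain ⟨rfl, hc, hv⟩ := isWalk_cons_iff_isChain.1 hw
      refine ⟨List.cons_ne_nil d l, hc, fun d₀ h₀ d₁ h₁ => ?_⟩
      obtain rfl : d = d₀ := Option.some.inj h₀
      obtain rfl := Option.some.inj (hlast.symm.trans h₁)
      exact hv

variable {A : Type} [AddCommGroup A] {c : E → A}

lemma IsWalk.walkSum_eq_sub {ℓ : V → A} (hℓ : ∀ e, ℓ (M.tgt e) = ℓ (M.src e) + c e)
    {u v : V} {l : List (E × Bool)} (h : M.IsWalk u v l) : walkSum c l = ℓ v - ℓ u := by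
  induction l generalizing u with
  | nil => simp [(isWalk_nil M).1 h]
  | cons d l ih =>
    rw [walkSum_cons, ih h.2, ← h.1]
    cases d with | mk e b =>
      cases b <;>
        simp only [dartValue, dtail, dhead, Bool.false_eq_true, ↓reduceIte, hℓ] <;> abel

lemma walkSum_eq_of_isWalk (H : ∀ l, M.IsClosedWalk l → walkSum c l = 0) {u v : V}
    {l₁ l₂ : List (E × Bool)} (h₁ : M.IsWalk u v l₁) (h₂ : M.IsWalk u v l₂) :
    walkSum c l₁ = walkSum c l₂ := by
  by_cases hnil : l₁ ++ (l₂.map revDart).reverse = []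
  · simp_all
  · have hloop := H _ (isClosedWalk_iff.2 ⟨hnil, u, h₁.append h₂.reverse⟩)
    rwa [walkSum_append, walkSum_reverse_map_revDart, ← sub_eq_add_neg, sub_eq_zero] at hloop

variable (M) in
def reachableSetoid : Setoid V where
  r u v := ∃ l, M.IsWalk u v l
  iseqv := ⟨fun _ => ⟨[], (isWalk_nil M).2 rfl⟩, fun ⟨_, h⟩ => ⟨_, h.reverse⟩,
    fun ⟨_, h⟩ ⟨_, h'⟩ => ⟨_, h.append h'⟩⟩

variable (M) in
theorem exists_potential_iff_walkSum_eq_zero (c : E → A) :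
    (∃ ℓ : V → A, ∀ e, ℓ (M.tgt e) = ℓ (M.src e) + c e) ↔
      ∀ l, M.IsClosedWalk l → walkSum c l = 0 := by
  constructor
  · rintro ⟨ℓ, hℓ⟩ l hl
    obtain ⟨-, v, hv⟩ := isClosedWalk_iff.1 hl
    simpa using hv.walkSum_eq_sub hℓ
  · intro H
    -- ℓ v is the weight of a chosen walk to v from the representative of its component.
    let S := M.reachableSetoid
    choose path hpath using fun v => (Quotient.mk_out (s := S) v : S (Quotient.mk S v).out v)
    refine ⟨fun v => walkSum c (path v), fun e => ?_⟩
    have hedge : M.IsWalk (M.src e) (M.tgt e) [(e, true)] := ⟨rfl, rfl⟩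
    have hrep : Quotient.mk S (M.src e) = Quotient.mk S (M.tgt e) := Quotient.sound ⟨_, hedge⟩
    have := walkSum_eq_of_isWalk H (hpath (M.tgt e)) (hrep ▸ (hpath (M.src e)).append hedge)
    simpa [dartValue] using this

end Multigraph

namespace PDCompletion

open Finset

variable {V E F : Type}

lemma src_ne_of_edgev (M : PDCompletion V E F) {v : V} (hv : M.kind v = PDKind.edgev) (e : E) :
    M.G.src e ≠ v :=
  fun h => M.src_not_edgev e (h ▸ hv)

variable [Fintype E]

lemma intCast_delta {R : Type} [Ring R] [DecidableEq E] (ρ : E → Bool) (W : List (E × Bool)) :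
    ((delta ρ W : ℤ) : R) = walkSum (fun e => if ρ e then (1 : R) else 0) W := by
  rw [delta, beta_charFlow]
  simpa [outFlow, Function.comp_def, apply_ite] using map_walkSum (outFlow ρ) (Int.castAddHom R) W

variable [DecidableEq V] (M : PDCompletion V E F) (ρ : E → Bool) {v : V}
  (hv : M.kind v = PDKind.edgev)
include hv

lemma outdeg_add_card_of_edgev :
    M.outdeg ρ v + #{e | M.G.tgt e = v ∧ ρ e = true} = M.degree v := by
  have hsplit := card_filter_add_card_filter_not (s := {e | M.G.tgt e = v}) (fun e => ρ e = false)
  simp only [filter_filter, Bool.not_eq_false] at hsplit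
  have hout : M.outdeg ρ v = #{e | M.G.tgt e = v ∧ ρ e = false} := by
    rw [outdeg]
    congr 1 with e
    simp [M.src_ne_of_edgev hv e, and_comm]
  have hdeg : M.degree v = #{e | M.G.tgt e = v} := by
    rw [degree]
    congr 1 with e
    simp [M.src_ne_of_edgev hv e]
  rw [hout, hdeg, ← hsplit]

lemma delta_eq_neg_card_of_edgev [DecidableEq E] {W : List (E × Bool)}
    (hW : ∀ e, charFlow W e =
      (if M.G.src e = v then 1 else 0) - (if M.G.tgt e = v then 1 else 0)) :
    delta ρ W = -#{e | M.G.tgt e = v ∧ ρ e = true} := by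
  rw [delta, beta, ← Finset.sum_boole, ← Finset.sum_neg_distrib]
  refine Finset.sum_congr rfl fun e _ => ?_
  simp only [hW, M.src_ne_of_edgev hv e, outFlow]
  split_ifs <;> simp_all

lemma outdeg_eq_one_or_four_of_edgev [DecidableEq E] (hdeg : M.degree v = 4)
    {W : List (E × Bool)} (hW : ∀ e, charFlow W e =
      (if M.G.src e = v then 1 else 0) - (if M.G.tgt e = v then 1 else 0))
    (h3 : delta ρ W ≡ 0 [ZMOD 3]) : M.outdeg ρ v = 1 ∨ M.outdeg ρ v = 4 := by
  have hsum := M.outdeg_add_card_of_edgev ρ hv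
  rw [M.delta_eq_neg_card_of_edgev ρ hv hW, Int.modEq_zero_iff_dvd, dvd_neg] at h3
  omega

end PDCompletion

theorem schnyder_orientation_iff_delta_zero_general {V E F : Type}
    [Fintype E] [DecidableEq V] [DecidableEq E]
    (M : PDCompletion V E F)
    (h4 : ∀ v, M.kind v = PDKind.edgev → M.degree v = 4)
    (dualFacialWalk : V → List (E × Bool))
    (hdfc : ∀ v, M.toSurfaceMap.dual.IsClosedWalk (dualFacialWalk v))
    (hdff : ∀ v e, charFlow (dualFacialWalk v) e =
      (if M.G.src e = v then 1 else 0) - (if M.G.tgt e = v then 1 else 0))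
    (ρ : E → Bool) :
    M.IsSchnyderOrientation ρ ↔
      ∀ W, M.toSurfaceMap.dual.IsClosedWalk W → PDCompletion.delta ρ W ≡ 0 [ZMOD 3] := by
  have hdelta : ∀ W, PDCompletion.delta ρ W ≡ 0 [ZMOD 3] ↔
      walkSum (fun e => if ρ e then (1 : ZMod 3) else 0) W = 0 := fun W => by
    rw [← PDCompletion.intCast_delta, ZMod.intCast_zmod_eq_zero_iff_dvd, Int.modEq_zero_iff_dvd]
    norm_num
  have hpot := M.toSurfaceMap.dual.exists_potential_iff_walkSum_eq_zero
    (fun e => if ρ e then (1 : ZMod 3) else 0)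
  constructor
  · rintro ⟨-, hℓ⟩ W hW
    exact (hdelta W).2 (hpot.1 hℓ W hW)
  · intro H
    exact ⟨fun v hv => M.outdeg_eq_one_or_four_of_edgev ρ hv (h4 v hv) (hdff v) (H _ (hdfc v)),
      hpot.2 fun W hW => (hdelta W).1 (H W hW)⟩

theorem schnyder_orientation_iff_delta_zero {V E F : Type}
    [Fintype V] [Fintype E] [DecidableEq V] [DecidableEq E] [DecidableEq F]
    (M : PDCompletion V E F) (hM : M.toSurfaceMap.GoodFacialWalks)
    (h4 : ∀ v, M.kind v = PDKind.edgev → M.degree v = 4)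
    (dualFacialWalk : V → List (E × Bool))
    (hdfc : ∀ v, M.toSurfaceMap.dual.IsClosedWalk (dualFacialWalk v))
    (hdff : ∀ v e, charFlow (dualFacialWalk v) e =
      (if M.G.src e = v then 1 else 0) - (if M.G.tgt e = v then 1 else 0))
    (ρ : E → Bool) :
    M.IsSchnyderOrientation ρ ↔
      ∀ W, M.toSurfaceMap.dual.IsClosedWalk W → PDCompletion.delta ρ W ≡ 0 [ZMOD 3] :=
  schnyder_orientation_iff_delta_zero_general M h4 dualFacialWalk hdfc hdff ρ
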